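/- Let μ and ν be Borel probability measures on ℝⁿ with finite first moments, and let x, x' ∼ μ and y, y' ∼ ν be independent. Then the energy distance 2E[‖x−y‖] − E[‖x−x'‖] − E[‖y−y'‖] is nonnegative. -/

import Mathlib

/-! On `ℝ`, writing `|a - b|` as the length of the interval between `a` and `b` and applying
Tonelli gives `E|X - Y| = ∫ (F(t) (1 - G(t)) + (1 - F(t)) G(t)) dt` for independent `X ∼ F`,
`Y ∼ G`, so the energy distance is `2 ∫ (F - G)² ≥ 0`.
In higher dimension, invariance of Lebesgue measure on the unit ball under reflections gives
`∫_{‖g‖<1} |⟪g, v⟫| dg = c ‖v‖` with `0 < c < ∞`; integrating the one-dimensional inequality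
for the projections `⟪g, ·⟫` over the ball gives the claim. Working with `ℝ≥0∞`-valued
integrals lets Tonelli apply without any integrability conditions. -/

open MeasureTheory Set
open scoped ENNReal RealInnerProductSpace

noncomputable def meanEDist {α : Type*} [PseudoEMetricSpace α] [MeasurableSpace α]
    (ρ σ : Measure α) : ℝ≥0∞ :=
  ∫⁻ x, ∫⁻ y, edist x y ∂σ ∂ρ

section MeanEDist

variable {α : Type*} [PseudoEMetricSpace α] [MeasurableSpace α] [OpensMeasurableSpace α]
  [SecondCountableTopology α]

theorem meanEDist_eq_lintegral_prod (ρ σ : Measure α) [SFinite σ] :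
    meanEDist ρ σ = ∫⁻ z, edist z.1 z.2 ∂ρ.prod σ :=
  (lintegral_prod _ measurable_edist.aemeasurable).symm

theorem meanEDist_map {β : Type*} [MeasurableSpace β] {f : β → α} (hf : Measurable f)
    (ρ σ : Measure β) [SFinite ρ] [SFinite σ] :
    meanEDist (ρ.map f) (σ.map f) = ∫⁻ z, edist (f z.1) (f z.2) ∂ρ.prod σ := by
  rw [meanEDist_eq_lintegral_prod, Measure.map_prod_map _ _ hf hf,
    lintegral_map measurable_edist (hf.prodMap hf)]
  rfl

end MeanEDist

theorem Real.edist_eq_volume (a b : ℝ) :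
    edist a b = volume {t | a ≤ t ∧ t < b ∨ b ≤ t ∧ t < a} := by
  have hset : {t | a ≤ t ∧ t < b ∨ b ≤ t ∧ t < a} = Ico (min a b) (max b a) :=
    Ico_union_Ico' le_rfl le_rfl
  rw [hset, Real.volume_Ico, max_comm, max_sub_min_eq_abs', edist_dist, Real.dist_eq]

theorem Real.meanEDist_eq_lintegral_Iic_Ioi (ρ σ : Measure ℝ) [SFinite ρ] [SFinite σ] :
    meanEDist ρ σ = ∫⁻ t, ρ (Iic t) * σ (Ioi t) + ρ (Ioi t) * σ (Iic t) := by
  set S : Set ((ℝ × ℝ) × ℝ) := {p | p.1.1 ≤ p.2 ∧ p.2 < p.1.2 ∨ p.1.2 ≤ p.2 ∧ p.2 < p.1.1}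
  have hS : MeasurableSet S := by measurability
  have hslice (t : ℝ) : (fun z => (z, t)) ⁻¹' S = Iic t ×ˢ Ioi t ∪ Ioi t ×ˢ Iic t := by
    ext z; simp only [S, mem_preimage, mem_ofPred_eq, mem_union, mem_prod, mem_Iic, mem_Ioi]; tauto
  calc meanEDist ρ σ = ∫⁻ z, volume (Prod.mk z ⁻¹' S) ∂ρ.prod σ := by
        simp_rw [meanEDist_eq_lintegral_prod, Real.edist_eq_volume]; rfl
    _ = ∫⁻ t, (ρ.prod σ) ((fun z => (z, t)) ⁻¹' S) := by
        rw [← Measure.prod_apply hS, Measure.prod_apply_symm hS]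
    _ = ∫⁻ t, ρ (Iic t) * σ (Ioi t) + ρ (Ioi t) * σ (Iic t) := by
        refine lintegral_congr fun t => ?_
        rw [hslice, measure_union _ (measurableSet_Ioi.prod measurableSet_Iic),
          Measure.prod_prod, Measure.prod_prod]
        exact (Iic_disjoint_Ioi le_rfl).set_prod_left _ _

theorem ENNReal.mul_add_mul_le_of_add_eq_one {a a' b b' : ℝ≥0∞} (ha : a + a' = 1)
    (hb : b + b' = 1) : a * a' + a' * a + (b * b' + b' * b) ≤ 2 * (a * b' + a' * b) := by
  have hfin {x y : ℝ≥0∞} (h : x + y = 1) : x ≠ ⊤ ∧ y ≠ ⊤ :=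
    ENNReal.add_ne_top.mp (h ▸ ENNReal.one_ne_top)
  lift a to NNReal using (hfin ha).1
  lift a' to NNReal using (hfin ha).2
  lift b to NNReal using (hfin hb).1
  lift b' to NNReal using (hfin hb).2
  norm_cast at ha hb ⊢
  rw [← NNReal.coe_le_coe]
  have ha' := congrArg NNReal.toReal ha
  have hb' := congrArg NNReal.toReal hb
  push_cast at ha' hb' ⊢
  nlinarith [sq_nonneg ((a : ℝ) - b)]

theorem Real.meanEDist_add_le (ρ σ : Measure ℝ) [IsProbabilityMeasure ρ]
    [IsProbabilityMeasure σ] : meanEDist ρ ρ + meanEDist σ σ ≤ 2 * meanEDist ρ σ := by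
  simp_rw [Real.meanEDist_eq_lintegral_Iic_Ioi]
  calc _ ≤ ∫⁻ t, (ρ (Iic t) * ρ (Ioi t) + ρ (Ioi t) * ρ (Iic t)
          + (σ (Iic t) * σ (Ioi t) + σ (Ioi t) * σ (Iic t))) := le_lintegral_add _ _
    _ ≤ ∫⁻ t, 2 * (ρ (Iic t) * σ (Ioi t) + ρ (Ioi t) * σ (Iic t)) := by
        refine lintegral_mono fun t => ?_
        have hcompl (m : Measure ℝ) [IsProbabilityMeasure m] : m (Iic t) + m (Ioi t) = 1 := by
          rw [← compl_Iic]; exact prob_add_prob_compl measurableSet_Iic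
        exact ENNReal.mul_add_mul_le_of_add_eq_one (hcompl ρ) (hcompl σ)
    _ = _ := lintegral_const_mul' 2 _ ENNReal.ofNat_ne_top

section InnerProductSpace

variable {E : Type*} [NormedAddCommGroup E] [InnerProductSpace ℝ E] [FiniteDimensional ℝ E]
  [MeasurableSpace E] [BorelSpace E]

theorem setLIntegral_ball_comp_linearIsometryEquiv (e : E ≃ₗᵢ[ℝ] E) (f : E → ℝ≥0∞) (r : ℝ) :
    ∫⁻ g in Metric.ball 0 r, f (e g) = ∫⁻ g in Metric.ball 0 r, f g := by
  rw [e.measurePreserving.setLIntegral_comp_emb e.toHomeomorph.measurableEmbedding,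
    e.image_ball, map_zero]

theorem setLIntegral_ball_enorm_inner (r : ℝ) (v : E) {u : E} (hu : ‖u‖ = 1) :
    ∫⁻ g in Metric.ball 0 r, ‖⟪g, v⟫‖ₑ = ‖v‖ₑ * ∫⁻ g in Metric.ball 0 r, ‖⟪g, u⟫‖ₑ := by
  have hnorm : ‖v‖ = ‖‖v‖ • u‖ := by simp [norm_smul, hu]
  set e := (ℝ ∙ (v - ‖v‖ • u))ᗮ.reflection
  have he (g : E) : ⟪e g, ‖v‖ • u⟫ = ⟪g, v⟫ := by
    rw [← Submodule.reflection_sub hnorm, LinearIsometryEquiv.inner_map_map]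
  calc ∫⁻ g in Metric.ball 0 r, ‖⟪g, v⟫‖ₑ
      = ∫⁻ g in Metric.ball 0 r, ‖⟪e g, ‖v‖ • u⟫‖ₑ := by simp_rw [he]
    _ = ∫⁻ g in Metric.ball 0 r, ‖v‖ₑ * ‖⟪g, u⟫‖ₑ := by
        rw [setLIntegral_ball_comp_linearIsometryEquiv e (fun g => ‖⟪g, ‖v‖ • u⟫‖ₑ)]
        simp_rw [real_inner_smul_right, enorm_mul, enorm_norm]
    _ = _ := lintegral_const_mul' _ _ enorm_ne_top

theorem setLIntegral_unitBall_enorm_inner_pos {u : E} (hu : ‖u‖ = 1) :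
    0 < ∫⁻ g in Metric.ball 0 1, ‖⟪g, u⟫‖ₑ := by
  have hcont : Continuous fun g : E => ‖⟪g, u⟫‖ₑ := by fun_prop
  rw [setLIntegral_pos_iff hcont.measurable]
  refine (hcont.isOpen_support.inter Metric.isOpen_ball).measure_pos _ ⟨(2⁻¹ : ℝ) • u, ?_, ?_⟩
  · simp [real_inner_smul_left, hu]
  · norm_num [norm_smul, hu]

theorem setLIntegral_unitBall_enorm_inner_lt_top (u : E) :
    ∫⁻ g in Metric.ball 0 1, ‖⟪g, u⟫‖ₑ < ⊤ := by
  calc ∫⁻ g in Metric.ball 0 1, ‖⟪g, u⟫‖ₑ ≤ ∫⁻ _ in Metric.ball (0 : E) 1, ‖u‖ₑ := by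
        refine setLIntegral_mono measurable_const fun g hg => ?_
        rw [← ofReal_norm, ← ofReal_norm]
        refine ENNReal.ofReal_le_ofReal ((norm_inner_le_norm g u).trans ?_)
        exact mul_le_of_le_one_left (norm_nonneg u) (mem_ball_zero_iff.mp hg).le
    _ < ⊤ := by
        rw [setLIntegral_const]
        exact ENNReal.mul_lt_top enorm_lt_top measure_ball_lt_top

theorem meanEDist_mul_setLIntegral_enorm_inner (ρ σ : Measure E) [SFinite ρ] [SFinite σ]
    {u : E} (hu : ‖u‖ = 1) :
    meanEDist ρ σ * ∫⁻ g in Metric.ball 0 1, ‖⟪g, u⟫‖ₑ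
      = ∫⁻ g in Metric.ball 0 1, meanEDist (ρ.map (⟪g, ·⟫)) (σ.map (⟪g, ·⟫)) := by
  have hmeas : Measurable fun p : (E × E) × E => ‖⟪p.2, p.1.1⟫ - ⟪p.2, p.1.2⟫‖ₑ := by fun_prop
  calc meanEDist ρ σ * ∫⁻ g in Metric.ball 0 1, ‖⟪g, u⟫‖ₑ
      = ∫⁻ z, (∫⁻ g in Metric.ball 0 1, ‖⟪g, z.1⟫ - ⟪g, z.2⟫‖ₑ) ∂ρ.prod σ := by
        rw [meanEDist_eq_lintegral_prod, ← lintegral_mul_const' _ _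
          (setLIntegral_unitBall_enorm_inner_lt_top u).ne]
        simp_rw [edist_eq_enorm_sub, ← setLIntegral_ball_enorm_inner 1 _ hu, inner_sub_right]
    _ = ∫⁻ g in Metric.ball 0 1, (∫⁻ z : E × E, ‖⟪g, z.1⟫ - ⟪g, z.2⟫‖ₑ ∂ρ.prod σ) :=
        lintegral_lintegral_swap hmeas.aemeasurable
    _ = _ := by
        refine lintegral_congr fun g => ?_
        simp_rw [meanEDist_map (f := (⟪g, ·⟫)) (by fun_prop), edist_eq_enorm_sub]

theorem meanEDist_add_le (ρ σ : Measure E) [IsProbabilityMeasure ρ] [IsProbabilityMeasure σ] :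
    meanEDist ρ ρ + meanEDist σ σ ≤ 2 * meanEDist ρ σ := by
  rcases subsingleton_or_nontrivial E with _ | _
  · have hzero (x y : E) : edist x y = 0 := by rw [Subsingleton.elim x y, edist_self]
    simp [meanEDist, hzero]
  obtain ⟨u, hu⟩ := exists_norm_eq E zero_le_one
  have hc₀ := (setLIntegral_unitBall_enorm_inner_pos hu).ne'
  have hc := (setLIntegral_unitBall_enorm_inner_lt_top u).ne
  rw [← ENNReal.mul_le_mul_iff_left hc₀ hc, add_mul, mul_assoc,
    meanEDist_mul_setLIntegral_enorm_inner _ _ hu, meanEDist_mul_setLIntegral_enorm_inner _ _ hu,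
    meanEDist_mul_setLIntegral_enorm_inner _ _ hu, ← lintegral_const_mul' _ _ ENNReal.ofNat_ne_top]
  refine (le_lintegral_add _ _).trans (lintegral_mono fun g => ?_)
  have hg : Measurable (⟪g, ·⟫ : E → ℝ) := by fun_prop
  have := Measure.isProbabilityMeasure_map (μ := ρ) hg.aemeasurable
  have := Measure.isProbabilityMeasure_map (μ := σ) hg.aemeasurable
  exact Real.meanEDist_add_le _ _

end InnerProductSpace

section NormedAddCommGroup

variable {α : Type*} [NormedAddCommGroup α] [MeasurableSpace α]

theorem integral_integral_norm_sub [BorelSpace α] [SecondCountableTopology α]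
    (ρ σ : Measure α) [SFinite σ] (h : meanEDist ρ σ ≠ ⊤) :
    ∫ x, ∫ y, ‖x - y‖ ∂σ ∂ρ = (meanEDist ρ σ).toReal := by
  have hinner (x : α) : ∫ y, ‖x - y‖ ∂σ = (∫⁻ y, edist x y ∂σ).toReal := by
    simp_rw [integral_norm_eq_lintegral_enorm (by fun_prop : AEStronglyMeasurable (x - ·) σ),
      edist_eq_enorm_sub]
  have hmeas : Measurable fun x => ∫⁻ y, edist x y ∂σ := measurable_edist.lintegral_prod_right'
  simp_rw [hinner]
  exact integral_toReal hmeas.aemeasurable (ae_lt_top hmeas h)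

theorem meanEDist_le_lintegral_enorm_add [OpensMeasurableSpace α] (ρ σ : Measure α)
    [IsProbabilityMeasure ρ] [IsProbabilityMeasure σ] :
    meanEDist ρ σ ≤ ∫⁻ x, ‖x‖ₑ ∂ρ + ∫⁻ y, ‖y‖ₑ ∂σ := by
  calc meanEDist ρ σ ≤ ∫⁻ x, ∫⁻ y, ‖x‖ₑ + ‖y‖ₑ ∂σ ∂ρ := by
        refine lintegral_mono fun x => lintegral_mono fun y => ?_
        rw [edist_eq_enorm_sub]
        exact enorm_sub_le
    _ = ∫⁻ x, ‖x‖ₑ ∂ρ + ∫⁻ y, ‖y‖ₑ ∂σ := by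
        simp [lintegral_add_left, measurable_enorm]

theorem meanEDist_ne_top [OpensMeasurableSpace α] {ρ σ : Measure α} [IsProbabilityMeasure ρ]
    [IsProbabilityMeasure σ] (hρ : Integrable (‖·‖) ρ) (hσ : Integrable (‖·‖) σ) :
    meanEDist ρ σ ≠ ⊤ := by
  have hρ' := hρ.hasFiniteIntegral
  have hσ' := hσ.hasFiniteIntegral
  simp only [HasFiniteIntegral, enorm_norm] at hρ' hσ'
  exact ((meanEDist_le_lintegral_enorm_add ρ σ).trans_lt (ENNReal.add_lt_top.mpr ⟨hρ', hσ'⟩)).ne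

end NormedAddCommGroup

/-- Nonnegativity of the energy distance between Borel probability measures on `ℝⁿ`
with finite first moments:
`2 E‖x − y‖ − E‖x − x'‖ − E‖y − y'‖ ≥ 0`. -/
theorem energyDist_nonneg {n : ℕ}
    (μ ν : Measure (EuclideanSpace ℝ (Fin n)))
    (hμ : IsProbabilityMeasure μ) (hν : IsProbabilityMeasure ν)
    (hμ1 : Integrable (fun x => ‖x‖) μ) (hν1 : Integrable (fun x => ‖x‖) ν) :
    0 ≤ 2 * ∫ x, ∫ y, ‖x - y‖ ∂ν ∂μ
        - ∫ x, ∫ y, ‖x - y‖ ∂μ ∂μ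
        - ∫ x, ∫ y, ‖x - y‖ ∂ν ∂ν := by
  have hμν := meanEDist_ne_top hμ1 hν1
  have hμμ := meanEDist_ne_top hμ1 hμ1
  have hνν := meanEDist_ne_top hν1 hν1
  rw [integral_integral_norm_sub _ _ hμν, integral_integral_norm_sub _ _ hμμ,
    integral_integral_norm_sub _ _ hνν]
  have key := ENNReal.toReal_mono (by finiteness) (meanEDist_add_le μ ν)
  rw [ENNReal.toReal_add hμμ hνν, ENNReal.toReal_mul, ENNReal.toReal_ofNat] at key
  linarith
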